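/- Let G be the n-cycle graph with n ≥ 3. Any candy-passing game on G with at least 3n candies eventually reaches a fixed configuration. -/

import Mathlib

/-!
The total number of candies is invariant, so every orbit is eventually periodic, and it suffices
to show that in a periodic configuration `x` with at least `3n` candies every vertex holds at
least `2` candies: then every vertex passes and receives two candies, and nothing changes.

Let `M` be the largest value seen along the periodic orbit. If `M ≤ 3`, the candy count forces
every vertex to hold exactly `3`. If `M ≥ 4`, a vertex `v` can only hold `M` after a round in
which it already held `M` and both its neighbours fired; running the orbit backwards, `v` holds
`M` at all times and its neighbours always fire. Finally, if `u - 1` and `u` always fire, then `u`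
loses a candy in every round in which `u + 1` does not fire; by periodicity its count never
decreases, so `u + 1` always fires too, and this propagates around the cycle.
-/

open Finset

/-- One round of the candy-passing game: each vertex holding at least its degree
passes one candy to each neighbor. -/
def candyRound {V : Type*} [Fintype V] [DecidableEq V]
    (G : SimpleGraph V) [DecidableRel G.Adj] (a : V → ℕ) : V → ℕ :=
  fun v => (if G.degree v ≤ a v then a v - G.degree v else a v) +
    ((G.neighborFinset v).filter fun u => G.degree u ≤ a u).card

open Function SimpleGraph

namespace Function

variable {α : Type*} {f : α → α} {x : α} {p : ℕ}

theorem exists_isPeriodicPt_iterate_of_mapsTo {s : Set α} (hs : s.Finite)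
    (hf : Set.MapsTo f s s) (hx : x ∈ s) : ∃ N p, 0 < p ∧ IsPeriodicPt f p (f^[N] x) := by
  obtain ⟨i, j, hij, heq⟩ :=
    hs.exists_lt_map_eq_of_forall_mem (f := fun t => f^[t] x) fun t => hf.iterate t hx
  refine ⟨i, j - i, by omega, ?_⟩
  rw [IsPeriodicPt, IsFixedPt, ← iterate_add_apply, Nat.sub_add_cancel hij.le]
  exact heq.symm

namespace IsPeriodicPt

theorem forall_iterate_of_apply_imp (hx : IsPeriodicPt f p x) (hp : 0 < p) {P : α → Prop}
    (hP : ∀ t, P (f (f^[t] x)) → P (f^[t] x)) {t₀ : ℕ} (h₀ : P (f^[t₀] x)) (t : ℕ) :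
    P (f^[t] x) := by
  have hlate : P (f^[t₀ + p * t] x) := by
    rwa [iterate_add_apply, (hx.mul_const t).eq]
  exact Nat.decreasingInduction (motive := fun k _ => P (f^[k] x))
    (fun k _ ih => hP k (by rwa [iterate_succ_apply'] at ih)) hlate (by nlinarith)

theorem apply_iterate_eq_of_antitone (hx : IsPeriodicPt f p x) (hp : 0 < p) {g : α → ℕ}
    (hg : ∀ t, g (f (f^[t] x)) ≤ g (f^[t] x)) (t : ℕ) : g (f (f^[t] x)) = g (f^[t] x) := by
  have hanti : Antitone fun t => g (f^[t] x) :=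
    antitone_nat_of_succ_le fun t => by simpa only [iterate_succ_apply'] using hg t
  refine (hg t).antisymm ?_
  calc g (f^[t] x) = g (f^[t + p] x) := by rw [iterate_add_apply, hx.eq]
    _ ≤ g (f^[t + 1] x) := hanti (by omega)
    _ = g (f (f^[t] x)) := by rw [iterate_succ_apply']

theorem exists_forall_iterate_apply_le {ι β : Type*} [Fintype ι] [Nonempty ι] [LinearOrder β]
    {f : (ι → β) → ι → β} {x : ι → β} (hx : IsPeriodicPt f p x) (hp : 0 < p) :
    ∃ t₀ i₀, ∀ t i, f^[t] x i ≤ f^[t₀] x i₀ := by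
  obtain ⟨⟨t₀, i₀⟩, -, hmax⟩ := (range p ×ˢ univ).exists_max_image
    (fun q : ℕ × ι => f^[q.1] x q.2) ⟨(0, Classical.arbitrary ι), by simp [hp]⟩
  refine ⟨t₀, i₀, fun t i => ?_⟩
  rw [← hx.iterate_mod_apply t]
  exact hmax (t % p, i) (by simp [Nat.mod_lt t hp])

end IsPeriodicPt

end Function

namespace SimpleGraph

variable {V : Type*} [Fintype V] (G : SimpleGraph V) [DecidableRel G.Adj]

theorem sum_sum_neighborFinset {M : Type*} [AddCommMonoid M] (g : V → M) :
    ∑ v, ∑ u ∈ G.neighborFinset v, g u = ∑ u, G.degree u • g u := by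
  calc ∑ v, ∑ u ∈ G.neighborFinset v, g u = ∑ u, ∑ v ∈ G.neighborFinset u, g u :=
        sum_comm' (by simp [adj_comm])
    _ = ∑ u, G.degree u • g u := by simp only [sum_const, card_neighborFinset_eq_degree]

def fires (a : V → ℕ) (u : V) : ℕ := if G.degree u ≤ a u then 1 else 0

variable {G} in
theorem fires_cases (a : V → ℕ) (u : V) :
    fires G a u = 1 ∧ G.degree u ≤ a u ∨ fires G a u = 0 ∧ a u < G.degree u := by
  unfold fires; split_ifs <;> omega

variable [DecidableEq V]

theorem candyRound_add_degree_mul_fires (a : V → ℕ) (v : V) :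
    candyRound G a v + G.degree v * fires G a v = a v + ∑ u ∈ G.neighborFinset v, fires G a u := by
  rw [candyRound, card_filter]
  unfold fires
  split_ifs <;> omega

theorem sum_candyRound (a : V → ℕ) : ∑ v, candyRound G a v = ∑ v, a v := by
  have h := sum_congr (s₁ := univ) rfl fun v _ => candyRound_add_degree_mul_fires G a v
  simp only [sum_add_distrib, sum_sum_neighborFinset, smul_eq_mul] at h
  omega

theorem sum_iterate_candyRound (a : V → ℕ) (t : ℕ) :
    ∑ v, (candyRound G)^[t] a v = ∑ v, a v :=
  congrFun (iterate_invariant (g := fun a : V → ℕ => ∑ v, a v)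
    (funext (sum_candyRound G)) t) a

theorem candyRound_eq_self_of_forall_degree_le {a : V → ℕ} (h : ∀ u, G.degree u ≤ a u) :
    candyRound G a = a := by
  funext v
  have hv := candyRound_add_degree_mul_fires G a v
  simp only [fires, if_pos (h _), sum_const, card_neighborFinset_eq_degree, smul_eq_mul] at hv
  omega

theorem exists_isPeriodicPt_iterate_candyRound (a : V → ℕ) :
    ∃ N p, 0 < p ∧ IsPeriodicPt (candyRound G) p ((candyRound G)^[N] a) := by
  refine exists_isPeriodicPt_iterate_of_mapsTo (s := {b | ∑ v, b v = ∑ v, a v}) ?_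
    (fun b hb => (sum_candyRound G b).trans hb) rfl
  refine (Set.finite_Iic fun _ => ∑ v, a v).subset fun b hb u => ?_
  exact (single_le_sum (fun _ _ => Nat.zero_le _) (mem_univ u)).trans hb.le

end SimpleGraph

open Fin.NatCast in
theorem Fin.forall_of_imp_add_one {n : ℕ} [NeZero n] {R : Fin n → Prop} {v : Fin n} (hv : R v)
    (h : ∀ u, R u → R (u + 1)) (u : Fin n) : R u := by
  have hreach : ∀ k : ℕ, R (v + (k : Fin n)) := fun k => by
    induction k with
    | zero => simpa using hv
    | succ k ih => simpa [add_assoc] using h _ ih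
  simpa using hreach (u - v).val

namespace SimpleGraph

variable {d : ℕ} {a : Fin (d + 3) → ℕ} {v : Fin (d + 3)}

theorem fires_cycleGraph_cases (a : Fin (d + 3) → ℕ) (u : Fin (d + 3)) :
    fires (cycleGraph (d + 3)) a u = 1 ∧ 2 ≤ a u ∨ fires (cycleGraph (d + 3)) a u = 0 ∧ a u < 2 :=
  cycleGraph_degree_three_le ▸ fires_cases a u

theorem candyRound_cycleGraph_add_two_mul_fires (a : Fin (d + 3) → ℕ) (v : Fin (d + 3)) :
    candyRound (cycleGraph (d + 3)) a v + 2 * fires (cycleGraph (d + 3)) a v =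
      a v + fires (cycleGraph (d + 3)) a (v - 1) + fires (cycleGraph (d + 3)) a (v + 1) := by
  have hne : v - 1 ≠ v + 1 := by
    intro h
    have hdeg := cycleGraph_degree_three_le (n := d) (v := v)
    rw [cycleGraph_degree_two_le, h, pair_eq_singleton, card_singleton] at hdeg
    omega
  have h := candyRound_add_degree_mul_fires (cycleGraph (d + 3)) a v
  rw [cycleGraph_degree_three_le, cycleGraph_neighborFinset, sum_pair hne] at h
  omega

theorem eq_and_two_le_neighbors_of_le_candyRound_cycleGraph {M : ℕ} (hM : 4 ≤ M) (hv : a v ≤ M)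
    (h : M ≤ candyRound (cycleGraph (d + 3)) a v) :
    a v = M ∧ 2 ≤ a (v - 1) ∧ 2 ≤ a (v + 1) := by
  -- a vertex that does not fire ends the round with at most `1 + 2 < 4` candies
  have := candyRound_cycleGraph_add_two_mul_fires a v
  have := fires_cycleGraph_cases a v
  have := fires_cycleGraph_cases a (v - 1)
  have := fires_cycleGraph_cases a (v + 1)
  omega

theorem candyRound_cycleGraph_apply_le (hv : 2 ≤ a v) (hpred : 2 ≤ a (v - 1)) :
    candyRound (cycleGraph (d + 3)) a v ≤ a v := by
  have := candyRound_cycleGraph_add_two_mul_fires a v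
  have := fires_cycleGraph_cases a v
  have := fires_cycleGraph_cases a (v - 1)
  have := fires_cycleGraph_cases a (v + 1)
  omega

theorem two_le_succ_of_candyRound_cycleGraph_apply_eq (hpred : 2 ≤ a (v - 1))
    (h : candyRound (cycleGraph (d + 3)) a v = a v) : 2 ≤ a (v + 1) := by
  have := candyRound_cycleGraph_add_two_mul_fires a v
  have := fires_cycleGraph_cases a v
  have := fires_cycleGraph_cases a (v - 1)
  have := fires_cycleGraph_cases a (v + 1)
  omega

variable {x : Fin (d + 3) → ℕ} {p : ℕ}

theorem two_le_iterate_succ_of_isPeriodicPt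
    (hx : IsPeriodicPt (candyRound (cycleGraph (d + 3))) p x) (hp : 0 < p)
    (hpred : ∀ t, 2 ≤ (candyRound (cycleGraph (d + 3)))^[t] x (v - 1))
    (hv : ∀ t, 2 ≤ (candyRound (cycleGraph (d + 3)))^[t] x v) (t : ℕ) :
    2 ≤ (candyRound (cycleGraph (d + 3)))^[t] x (v + 1) := by
  have hconst := hx.apply_iterate_eq_of_antitone hp (g := fun a => a v)
    fun t => candyRound_cycleGraph_apply_le (hv t) (hpred t)
  exact two_le_succ_of_candyRound_cycleGraph_apply_eq (hpred t) (hconst t)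

theorem two_le_of_isPeriodicPt_candyRound_cycleGraph
    (hx : IsPeriodicPt (candyRound (cycleGraph (d + 3))) p x) (hp : 0 < p)
    (hsum : 3 * (d + 3) ≤ ∑ v, x v) (u : Fin (d + 3)) : 2 ≤ x u := by
  set f := candyRound (cycleGraph (d + 3))
  obtain ⟨t₀, v, hmax⟩ := hx.exists_forall_iterate_apply_le hp
  set M := f^[t₀] x v
  by_cases hM : M ≤ 3
  · have hle : ∀ w, x w ≤ 3 := fun w => (hmax 0 w).trans hM
    have hsum_eq : ∑ w, x w = ∑ _w : Fin (d + 3), 3 :=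
      (sum_le_sum fun w _ => hle w).antisymm (by simpa [mul_comm] using hsum)
    have := (sum_eq_sum_iff_of_le fun w _ => hle w).1 hsum_eq u (mem_univ u)
    omega
  have hvM : ∀ t, f^[t] x v = M := hx.forall_iterate_of_apply_imp hp (P := fun a => a v = M)
    (fun t h => (eq_and_two_le_neighbors_of_le_candyRound_cycleGraph (by omega) (hmax t v)
      h.ge).1) rfl
  have hnbr (t : ℕ) : 2 ≤ f^[t] x (v - 1) ∧ 2 ≤ f^[t] x (v + 1) :=
    (eq_and_two_le_neighbors_of_le_candyRound_cycleGraph (by omega) (hmax t v)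
      (by rw [← hvM (t + 1), iterate_succ_apply'])).2
  refine (Fin.forall_of_imp_add_one (R := fun w => ∀ t, 2 ≤ f^[t] x (w - 1) ∧ 2 ≤ f^[t] x w)
    (fun t => ⟨(hnbr t).1, by rw [hvM]; omega⟩) (fun w hw t => ?_) u 0).2
  exact ⟨by simpa using (hw t).2, two_le_iterate_succ_of_isPeriodicPt hx hp
    (fun t => (hw t).1) (fun t => (hw t).2) t⟩

end SimpleGraph

theorem candy_passing_cycle_stabilizes (n : ℕ) (hn : 3 ≤ n)
    (a₀ : Fin n → ℕ) (htot : 3 * n ≤ ∑ v, a₀ v) :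
    ∃ N : ℕ, ∀ m ≥ N,
      (candyRound (SimpleGraph.cycleGraph n))^[m] a₀ =
      (candyRound (SimpleGraph.cycleGraph n))^[N] a₀ := by
  obtain ⟨d, rfl⟩ : ∃ d, n = d + 3 := ⟨n - 3, by omega⟩
  obtain ⟨N, p, hp, hper⟩ := exists_isPeriodicPt_iterate_candyRound (cycleGraph (d + 3)) a₀
  have hfix : IsFixedPt (candyRound (cycleGraph (d + 3)))
      ((candyRound (cycleGraph (d + 3)))^[N] a₀) :=
    candyRound_eq_self_of_forall_degree_le _ fun u => cycleGraph_degree_three_le.trans_le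
      (two_le_of_isPeriodicPt_candyRound_cycleGraph hper hp
        (by rwa [sum_iterate_candyRound]) u)
  refine ⟨N, fun m hm => ?_⟩
  rw [← Nat.sub_add_cancel hm, iterate_add_apply, (hfix.iterate _).eq]
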